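/- Let Ω ⊂ ℝ² be the open triangle with vertices A(−2, 1/3), B(0, 1/3), C(0, 1). Define α(x,y) = ((x y² + y − 1/9)/3)^{1/3} + 1/3 (real cube root) and z(x,y) = 1 − e^{1/α(x,y) − 1/y}. Then for every (x,y) ∈ Ω one has x y² + y − 1/9 > 0 and |∂z/∂x(x,y)| ≥ (1/(81 e²)) · ((x y² + y − 1/9)/3)^{−2/3}. -/

import Mathlib

open MeasureTheory Set Real

/-- The real (odd) cube root. -/
noncomputable def cbrt (t : ℝ) : ℝ :=
  if 0 ≤ t then t ^ ((1:ℝ)/3) else -((-t) ^ ((1:ℝ)/3))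

/-- The open triangle with vertices A(−2,1/3), B(0,1/3), C(0,1):
its sides lie on the lines y = 1/3, x = 0 and y = x/3 + 1. -/
def TriangleEx4 : Set (ℝ × ℝ) :=
  {p : ℝ × ℝ | 1/3 < p.2 ∧ p.1 < 0 ∧ p.2 < p.1 / 3 + 1}

/-- α(x,y) = ((x y² + y − 1/9)/3)^{1/3} + 1/3. -/
noncomputable def alphaEx4 : ℝ × ℝ → ℝ := fun p =>
  cbrt ((p.1 * p.2 ^ 2 + p.2 - 1/9) / 3) + 1/3

/-- The explicit solution z(x,y) = 1 − e^{1/α(x,y) − 1/y} of Example 4. -/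
noncomputable def zEx4 : ℝ × ℝ → ℝ := fun p =>
  1 - Real.exp (1 / alphaEx4 p - 1 / p.2)

/-- Partial derivative ∂z/∂x. -/
noncomputable def zEx4x (p : ℝ × ℝ) : ℝ := deriv (fun t => zEx4 (t, p.2)) p.1

/-!
Write `u = (x y² + y − 1/9)/3`. On `Ω` one has `u − (y − 1/3)³ = y² (x + 3 − 3y)/3 > 0` and
`u < (y − 1/9)/3 < (2/3)³`, so `y < α < 1`. Differentiating,
`∂z/∂x = e^{1/α − 1/y} · (y²/9) u^{−2/3} / α²`, and the three bounds `1/α − 1/y > 1 − 3 = −2`,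
`y² > 1/9`, `α² < 1` give the claim.
-/

open Topology

lemma cbrt_eq_rpow {t : ℝ} (ht : 0 ≤ t) : cbrt t = t ^ ((1:ℝ)/3) := if_pos ht

lemma cbrt_pos {t : ℝ} (ht : 0 < t) : 0 < cbrt t := by
  rw [cbrt_eq_rpow ht.le]
  exact rpow_pos_of_pos ht _

lemma cbrt_pow_three {a : ℝ} (ha : 0 ≤ a) : cbrt (a ^ 3) = a := by
  rw [cbrt_eq_rpow (by positivity), one_div]
  exact_mod_cast pow_rpow_inv_natCast ha three_ne_zero

lemma cbrt_lt_cbrt {s t : ℝ} (hs : 0 ≤ s) (hst : s < t) : cbrt s < cbrt t := by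
  rw [cbrt_eq_rpow hs, cbrt_eq_rpow (hs.trans hst.le)]
  exact rpow_lt_rpow hs hst (by norm_num)

lemma hasDerivAt_cbrt {t : ℝ} (ht : 0 < t) : HasDerivAt cbrt (t ^ (-(2:ℝ)/3) / 3) t := by
  have hcbrt : cbrt =ᶠ[𝓝 t] fun s => s ^ ((1:ℝ)/3) := by
    filter_upwards [Ioi_mem_nhds ht] with s hs using cbrt_eq_rpow (le_of_lt hs)
  have h := (hasDerivAt_rpow_const (p := 1/3) (Or.inl ht.ne')).congr_of_eventuallyEq hcbrt
  rwa [show (1:ℝ) / 3 * t ^ ((1:ℝ)/3 - 1) = t ^ (-(2:ℝ)/3) / 3 by norm_num; ring] at h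

lemma pow_three_lt_of_mem_triangleEx4 {x y : ℝ} (h : (x, y) ∈ TriangleEx4) :
    (y - 1/3) ^ 3 < (x * y ^ 2 + y - 1/9) / 3 := by
  obtain ⟨hy, -, hxy⟩ := h
  have key : (x * y ^ 2 + y - 1/9) / 3 - (y - 1/3) ^ 3 = y ^ 2 * (x + 3 - 3 * y) / 3 := by ring
  have : 0 < y ^ 2 * (x + 3 - 3 * y) / 3 := by
    have : 0 < x + 3 - 3 * y := by linarith
    positivity
  linarith

lemma lt_pow_three_of_mem_triangleEx4 {x y : ℝ} (h : (x, y) ∈ TriangleEx4) :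
    (x * y ^ 2 + y - 1/9) / 3 < (2/3) ^ 3 := by
  obtain ⟨hy, hx, hxy⟩ := h
  have : x * y ^ 2 < 0 := mul_neg_of_neg_of_pos hx (by positivity)
  linarith

lemma alphaEx4_mem_Ioo {x y : ℝ} (h : (x, y) ∈ TriangleEx4) : alphaEx4 (x, y) ∈ Ioo y 1 := by
  have hy : 1/3 < y := h.1
  have hlo := cbrt_lt_cbrt (by positivity) (pow_three_lt_of_mem_triangleEx4 h)
  have hhi := cbrt_lt_cbrt ((pow_pos (by linarith) 3).trans (pow_three_lt_of_mem_triangleEx4 h)).le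
    (lt_pow_three_of_mem_triangleEx4 h)
  rw [cbrt_pow_three (by linarith)] at hlo
  rw [cbrt_pow_three (by norm_num)] at hhi
  constructor <;> simp only [alphaEx4] <;> linarith

lemma hasDerivAt_zEx4_fst {x y : ℝ} (hu : 0 < (x * y ^ 2 + y - 1/9) / 3) :
    HasDerivAt (fun t => zEx4 (t, y))
      (exp (1 / alphaEx4 (x, y) - 1 / y) *
        (y ^ 2 / 9 * ((x * y ^ 2 + y - 1/9) / 3) ^ (-(2:ℝ)/3)) / alphaEx4 (x, y) ^ 2) x := by
  have hg : HasDerivAt (fun t : ℝ => (t * y ^ 2 + y - 1/9) / 3) (y ^ 2 / 3) x :=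
    ((((hasDerivAt_id x).mul_const (y ^ 2)).add_const y).sub_const (1/9)).div_const 3
      |>.congr_deriv (by ring)
  have hα : HasDerivAt (fun t => alphaEx4 (t, y))
      (((x * y ^ 2 + y - 1/9) / 3) ^ (-(2:ℝ)/3) / 3 * (y ^ 2 / 3)) x :=
    ((hasDerivAt_cbrt hu).comp x hg).add_const (1/3)
  have hα0 : alphaEx4 (x, y) ≠ 0 := by
    have := cbrt_pos hu
    simp only [alphaEx4]
    positivity
  exact (((hasDerivAt_const x 1).div hα hα0).sub_const (1 / y)).exp.const_sub 1
    |>.congr_deriv (by rw [Pi.div_apply]; ring)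

theorem stmt_5 :
    ∀ p ∈ TriangleEx4,
      0 < p.1 * p.2 ^ 2 + p.2 - 1/9 ∧
      1 / (81 * Real.exp 2) *
        ((p.1 * p.2 ^ 2 + p.2 - 1/9) / 3) ^ (-(2:ℝ)/3) ≤ |zEx4x p| := by
  rintro ⟨x, y⟩ hp
  have hy : 1/3 < y := hp.1
  have hu : 0 < (x * y ^ 2 + y - 1/9) / 3 :=
    (pow_pos (by linarith) 3).trans (pow_three_lt_of_mem_triangleEx4 hp)
  refine ⟨by linarith, ?_⟩
  obtain ⟨hyα, hα1⟩ := alphaEx4_mem_Ioo hp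
  have hα : 0 < alphaEx4 (x, y) := by linarith
  have hexp : -2 ≤ 1 / alphaEx4 (x, y) - 1 / y := by
    have h1 : 1 ≤ 1 / alphaEx4 (x, y) := by rw [le_div_iff₀ hα]; linarith
    have h2 : 1 / y < 3 := by rw [div_lt_iff₀ (by linarith)]; linarith
    linarith
  have hy2 : 1 / 9 ≤ y ^ 2 := by nlinarith
  have hα2 : alphaEx4 (x, y) ^ 2 ≤ 1 := pow_le_one₀ hα.le hα1.le
  have hw := rpow_pos_of_pos hu (-(2:ℝ)/3)
  simp only [zEx4x]
  rw [(hasDerivAt_zEx4_fst hu).deriv, abs_of_pos (by positivity)]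
  calc 1 / (81 * exp 2) * ((x * y ^ 2 + y - 1/9) / 3) ^ (-(2:ℝ)/3)
      = exp (-2) * (1 / 9 / 9 * ((x * y ^ 2 + y - 1/9) / 3) ^ (-(2:ℝ)/3)) / 1 := by
        rw [exp_neg]; field_simp; ring
    _ ≤ _ := by gcongr
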